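/- Let m ≥ 4 and δ ∈ [0,1]. If tr(Π V ρ V†) ≥ 1 − δ/4 for a projection Π, a unitary V, and a density operator ρ, and if density operators ρ₁,…,ρ_{m/2+1} with ρ_{m/2+1} = ρ satisfy the hypotheses of the fidelity-sum lemma with k = m/2 + 1 and soundness bound 1 − δ, then Σ_{j=1}^{m/2} F(tr_M V_j ρ_j V_j†, tr_M ρ_{j+1}) ≤ m/2 − δ²/(16m). -/

import Mathlib

open scoped ComplexOrder
open Matrix

/-- The square root of a positive semidefinite matrix (junk value `0` otherwise). -/
noncomputable def matSqrt {n : Type*} [Fintype n] [DecidableEq n] (A : Matrix n n ℂ) :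
    Matrix n n ℂ :=
  open scoped Classical in
  if h : A.PosSemidef then
    (h.1.eigenvectorUnitary : Matrix n n ℂ) * diagonal ((↑) ∘ (√·) ∘ h.1.eigenvalues) *
      (star h.1.eigenvectorUnitary : Matrix n n ℂ)
  else 0

/-- Fidelity `F(ρ,σ) = tr √(√ρ σ √ρ)` of two density operators. -/
noncomputable def fidelity {n : Type*} [Fintype n] [DecidableEq n] (ρ σ : Matrix n n ℂ) : ℝ :=
  ((matSqrt (matSqrt ρ * σ * matSqrt ρ)).trace).re

/-- Outer product `|v⟩⟨v|`. -/
def outer {ι : Type*} (v : ι → ℂ) : Matrix ι ι ℂ := fun i j => v i * star (v j)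

/-- Partial trace over the second tensor factor. -/
noncomputable def ptraceRight {H K : Type*} [Fintype K]
    (A : Matrix (H × K) (H × K) ℂ) : Matrix H H ℂ :=
  fun i j => ∑ k, A (i, k) (j, k)

/-- Extend an operator on `V ⊗ M` to `V ⊗ M ⊗ P` by tensoring with the identity on `P`. -/
def extendVM {Vt Mt Pt : Type*} [DecidableEq Pt] (A : Matrix (Vt × Mt) (Vt × Mt) ℂ) :
    Matrix (Vt × Mt × Pt) (Vt × Mt × Pt) ℂ :=
  fun p q => A (p.1, p.2.1) (q.1, q.2.1) * (if p.2.2 = q.2.2 then 1 else 0)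

/-- Extend an operator on `M ⊗ P` to `V ⊗ M ⊗ P` by tensoring with the identity on `V`. -/
def extendMP {Vt Mt Pt : Type*} [DecidableEq Vt] (B : Matrix (Mt × Pt) (Mt × Pt) ℂ) :
    Matrix (Vt × Mt × Pt) (Vt × Mt × Pt) ℂ :=
  fun p q => (if p.1 = q.1 then 1 else 0) * B p.2 q.2

/-- The state `V_j P_{j-1} V_{j-1} ⋯ P_1 V_1 |0⟩` of `V ⊗ M ⊗ P` obtained after the
`j`-th verifier transformation, starting from the all-zeros state `|0⟩` (the standard
basis vector at `default`). -/
noncomputable def chainState {Vt Mt Pt : Type*} [Fintype Vt] [Fintype Mt] [Fintype Pt]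
    [DecidableEq Vt] [DecidableEq Mt] [DecidableEq Pt]
    [Inhabited Vt] [Inhabited Mt] [Inhabited Pt]
    (Vs : ℕ → Matrix (Vt × Mt) (Vt × Mt) ℂ) (Ps : ℕ → Matrix (Mt × Pt) (Mt × Pt) ℂ) :
    ℕ → (Vt × Mt × Pt → ℂ)
  | 0 => fun p => if p = default then 1 else 0
  | 1 => (extendVM (Vs 1)).mulVec (fun p => if p = default then 1 else 0)
  | (j+2) => (extendVM (Vs (j+2))).mulVec
      ((extendMP (Ps (j+1))).mulVec (chainState Vs Ps (j+1)))



set_option maxRecDepth 8000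

namespace Matrix.PosSemidef

/-- Square root of a positive semidefinite matrix via its spectral decomposition. -/
noncomputable def sqrt {n : Type*} [Fintype n] [DecidableEq n] {A : Matrix n n ℂ}
    (hA : A.PosSemidef) : Matrix n n ℂ :=
  (hA.1.eigenvectorUnitary : Matrix n n ℂ) * diagonal ((↑) ∘ (√·) ∘ hA.1.eigenvalues) *
    (star hA.1.eigenvectorUnitary : Matrix n n ℂ)

lemma spectral_aux {n : Type*} [Fintype n] [DecidableEq n] {A : Matrix n n ℂ}
    (hA : A.PosSemidef) :
    A = (hA.1.eigenvectorUnitary : Matrix n n ℂ) * diagonal (Complex.ofReal ∘ hA.1.eigenvalues) *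
      (star hA.1.eigenvectorUnitary : Matrix n n ℂ) := by
  have := hA.1.spectral_theorem
  rw [Unitary.conjStarAlgAut_apply] at this
  exact this

lemma posSemidef_sqrt {n : Type*} [Fintype n] [DecidableEq n] {A : Matrix n n ℂ}
    (hA : A.PosSemidef) : hA.sqrt.PosSemidef := by
  have hD : (diagonal ((↑) ∘ (√·) ∘ hA.1.eigenvalues) : Matrix n n ℂ).PosSemidef :=
    posSemidef_diagonal_iff.mpr fun i => Complex.zero_le_real.mpr (Real.sqrt_nonneg _)
  have := hD.mul_mul_conjTranspose_same (hA.1.eigenvectorUnitary : Matrix n n ℂ)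
  rwa [← Matrix.star_eq_conjTranspose] at this

lemma sqrt_mul_self {n : Type*} [Fintype n] [DecidableEq n] {A : Matrix n n ℂ}
    (hA : A.PosSemidef) : hA.sqrt * hA.sqrt = A := by
  set U : Matrix n n ℂ := (hA.1.eigenvectorUnitary : Matrix n n ℂ) with hUdef
  have hU : star U * U = 1 := Matrix.mem_unitaryGroup_iff'.mp hA.1.eigenvectorUnitary.2
  have hE : (diagonal ((↑) ∘ (√·) ∘ hA.1.eigenvalues) : Matrix n n ℂ) *
      diagonal ((↑) ∘ (√·) ∘ hA.1.eigenvalues) = diagonal (Complex.ofReal ∘ hA.1.eigenvalues) := by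
    rw [diagonal_mul_diagonal]
    congr 1; funext i
    simp only [Function.comp_apply]
    rw [← Complex.ofReal_mul, Real.mul_self_sqrt (hA.eigenvalues_nonneg i)]
  have hs : hA.sqrt = U * diagonal ((↑) ∘ (√·) ∘ hA.1.eigenvalues) * star U := rfl
  rw [hs]
  calc U * diagonal ((↑) ∘ (√·) ∘ hA.1.eigenvalues) * star U
        * (U * diagonal ((↑) ∘ (√·) ∘ hA.1.eigenvalues) * star U)
      = U * (diagonal ((↑) ∘ (√·) ∘ hA.1.eigenvalues) * (star U * U)
          * diagonal ((↑) ∘ (√·) ∘ hA.1.eigenvalues)) * star U := by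
        simp only [Matrix.mul_assoc]
    _ = A := by rw [hU, Matrix.mul_one, hE]; exact (spectral_aux hA).symm

lemma eq_sqrt_of_sq_eq {n : Type*} [Fintype n] [DecidableEq n] {A : Matrix n n ℂ}
    (hA : A.PosSemidef) (_hB : A.PosSemidef) (h : A ^ 2 = A) : A = hA.sqrt := by
  set U : Matrix n n ℂ := (hA.1.eigenvectorUnitary : Matrix n n ℂ) with hUdef
  set D : Matrix n n ℂ := diagonal (Complex.ofReal ∘ hA.1.eigenvalues) with hDdef
  have hU : star U * U = 1 := Matrix.mem_unitaryGroup_iff'.mp hA.1.eigenvectorUnitary.2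
  have hU' : U * star U = 1 := Matrix.mem_unitaryGroup_iff.mp hA.1.eigenvectorUnitary.2
  have hsp : A = U * D * star U := spectral_aux hA
  have e : star U * A * U = D := by
    rw [hsp]
    calc star U * (U * D * star U) * U = (star U * U) * D * (star U * U) := by
          simp only [Matrix.mul_assoc]
      _ = D := by rw [hU, Matrix.one_mul, Matrix.mul_one]
  have hAA : A * A = A := by rw [← pow_two]; exact h
  have hD : D * D = D := by
    calc D * D = (star U * A * U) * (star U * A * U) := by rw [e]
      _ = star U * A * (U * star U) * A * U := by simp only [Matrix.mul_assoc]
      _ = star U * (A * A) * U := by rw [hU', Matrix.mul_one]; simp only [Matrix.mul_assoc]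
      _ = D := by rw [hAA, e]
  have hlam : ∀ i, Real.sqrt (hA.1.eigenvalues i) = hA.1.eigenvalues i := by
    intro i
    have h1 := congrFun (congrFun hD i) i
    rw [hDdef, diagonal_mul_diagonal, diagonal_apply_eq, diagonal_apply_eq] at h1
    simp only [Function.comp_apply] at h1
    have h2 : hA.1.eigenvalues i * hA.1.eigenvalues i = hA.1.eigenvalues i := by
      exact_mod_cast h1
    have h4 : hA.1.eigenvalues i * (hA.1.eigenvalues i - 1) = 0 := by
      rw [mul_sub, h2, mul_one, sub_self]
    rcases mul_eq_zero.mp h4 with h3 | h3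
    · rw [h3]; simp
    · have h5 : hA.1.eigenvalues i = 1 := by linarith
      rw [h5]; simp
  have hs : hA.sqrt = U * diagonal ((↑) ∘ (√·) ∘ hA.1.eigenvalues) * star U := rfl
  have hdiag : (diagonal ((↑) ∘ (√·) ∘ hA.1.eigenvalues) : Matrix n n ℂ) = D := by
    rw [hDdef]; congr 1; funext i; simp only [Function.comp_apply, hlam i]
  rw [hs, hdiag]; exact hsp

end Matrix.PosSemidef

set_option maxHeartbeats 1000000
set_option linter.unusedSectionVars false
open Polynomial

variable {K H : Type*} [Fintype K] [DecidableEq K] [Fintype H] [DecidableEq H]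

/-- Trace-norm achievability: there is a unitary `W` with `tr (B W) = tr √(BᴴB)`. -/
lemma trace_norm_achieves (B : Matrix K K ℂ) :
    ∃ W ∈ Matrix.unitaryGroup K ℂ,
      (B * W).trace = ((Matrix.posSemidef_conjTranspose_mul_self B).sqrt).trace := by
  classical
  set hM := Matrix.posSemidef_conjTranspose_mul_self B with hMdef
  set hH := hM.1 with hHdef
  set V : Matrix K K ℂ := (hH.eigenvectorUnitary : Matrix K K ℂ) with hV
  set d : K → ℝ := hH.eigenvalues with hd
  have hd0 : ∀ i, 0 ≤ d i := fun i => hM.eigenvalues_nonneg i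
  have hVmem : V ∈ Matrix.unitaryGroup K ℂ := hH.eigenvectorUnitary.2
  have hspec : Bᴴ * B = V * diagonal (Complex.ofReal ∘ d) * Vᴴ := by
    simpa [← Matrix.star_eq_conjTranspose] using hH.spectral_theorem
  have h1 : Vᴴ * V = 1 := by
    simpa [Matrix.star_eq_conjTranspose] using Matrix.mem_unitaryGroup_iff'.mp hVmem
  have hBV : (B * V)ᴴ * (B * V) = diagonal (Complex.ofReal ∘ d) := by
    calc (B * V)ᴴ * (B * V) = Vᴴ * (Bᴴ * B) * V := by
          rw [conjTranspose_mul]; noncomm_ring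
      _ = Vᴴ * V * diagonal (Complex.ofReal ∘ d) * (Vᴴ * V) := by
          rw [hspec]; noncomm_ring
      _ = diagonal (Complex.ofReal ∘ d) := by rw [h1, one_mul, mul_one]
  set w : K → EuclideanSpace ℂ K := fun i => WithLp.toLp 2 (fun k => (B * V) k i) with hw
  have hwin : ∀ i j, (inner ℂ (w i) (w j) : ℂ) = diagonal (Complex.ofReal ∘ d) i j := by
    intro i j
    rw [PiLp.inner_apply]
    have h2 := congrFun (congrFun hBV i) j
    rw [Matrix.mul_apply] at h2
    simp only [Matrix.conjTranspose_apply] at h2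
    simp only [RCLike.inner_apply, hw, PiLp.toLp_apply, starRingEnd_apply]
    rw [← h2]
    exact Finset.sum_congr rfl fun k _ => mul_comm _ _
  set f : K → EuclideanSpace ℂ K :=
    fun i => ((Real.sqrt (d i) : ℂ))⁻¹ • w i with hf
  have horth : Orthonormal ℂ (Set.restrict {i | d i ≠ 0} f) := by
    rw [orthonormal_iff_ite]
    rintro ⟨i, hi⟩ ⟨j, hj⟩
    simp only [Set.restrict_apply, hf]
    change inner ℂ (((Real.sqrt (d i) : ℂ))⁻¹ • w i) (((Real.sqrt (d j) : ℂ))⁻¹ • w j) = _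
    rw [inner_smul_left, inner_smul_right, hwin i j]
    by_cases hij : i = j
    · subst hij
      rw [if_pos rfl]
      simp only [diagonal_apply_eq, Function.comp_apply]
      have hdi : (0:ℝ) < d i := lt_of_le_of_ne (hd0 i) (Ne.symm hi)
      have hs0 : (Real.sqrt (d i) : ℂ) ≠ 0 := by
        simp [Complex.ofReal_ne_zero, Real.sqrt_ne_zero', hdi]
      rw [map_inv₀, Complex.conj_ofReal]
      rw [show ((d i : ℝ) : ℂ) = (Real.sqrt (d i) : ℂ) * (Real.sqrt (d i) : ℂ) by
        rw [← Complex.ofReal_mul, Real.mul_self_sqrt (hd0 i)]]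
      field_simp
    · have hne : (⟨i, hi⟩ : {i | d i ≠ 0}) ≠ ⟨j, hj⟩ := by simpa using hij
      rw [if_neg hne, diagonal_apply_ne _ hij]
      ring
  obtain ⟨b, hb⟩ := horth.exists_orthonormalBasis_extension_of_card_eq
    (by simp [finrank_euclideanSpace])
  set U : Matrix K K ℂ := fun k i => b i k with hU
  have hUmem : U ∈ Matrix.unitaryGroup K ℂ := by
    rw [Matrix.mem_unitaryGroup_iff']
    ext i j
    rw [Matrix.mul_apply, Matrix.one_apply]
    have hinner := (orthonormal_iff_ite.mp b.orthonormal) i j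
    rw [PiLp.inner_apply] at hinner
    simp only [RCLike.inner_apply, starRingEnd_apply] at hinner
    rw [← hinner]
    exact Finset.sum_congr rfl fun k _ => by rw [Matrix.star_apply]; exact mul_comm _ _
  refine ⟨V * Uᴴ, mul_mem hVmem (Unitary.star_mem hUmem), ?_⟩
  have hsqrt : hM.sqrt = V * diagonal (Complex.ofReal ∘ Real.sqrt ∘ d) * Vᴴ := rfl
  have htr2 : (hM.sqrt).trace = ∑ j, (Real.sqrt (d j) : ℂ) := by
    rw [hsqrt, Matrix.trace_mul_cycle, h1, one_mul, Matrix.trace_diagonal]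
    rfl
  rw [htr2]
  have hmain : (B * (V * Uᴴ)).trace = ∑ j, (inner ℂ (b j) (w j) : ℂ) := by
    calc (B * (V * Uᴴ)).trace = ∑ i, ∑ j, (B * V) i j * star (U i j) := by
          rw [← Matrix.mul_assoc, Matrix.trace]
          refine Finset.sum_congr rfl fun i _ => ?_
          rw [Matrix.diag_apply, Matrix.mul_apply]
          exact Finset.sum_congr rfl fun j _ => by rw [Matrix.conjTranspose_apply]
      _ = ∑ j, ∑ i, (B * V) i j * star (U i j) := Finset.sum_comm
      _ = ∑ j, (inner ℂ (b j) (w j) : ℂ) := by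
          refine Finset.sum_congr rfl fun j _ => ?_
          rw [PiLp.inner_apply]
          refine Finset.sum_congr rfl fun i _ => ?_
          simp only [RCLike.inner_apply, starRingEnd_apply, hU, hw, PiLp.toLp_apply, mul_comm]
  rw [hmain]
  refine Finset.sum_congr rfl fun j _ => ?_
  by_cases hdj : d j = 0
  · have hwj : w j = 0 := by
      have h0 : (inner ℂ (w j) (w j) : ℂ) = 0 := by
        rw [hwin j j]; simp [hdj]
      exact inner_self_eq_zero.mp h0
    simp [hwj, hdj]
  · have hbj : b j = f j := hb j hdj
    rw [hbj, hf, inner_smul_left, hwin j j]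
    simp only [diagonal_apply_eq, Function.comp_apply]
    rw [map_inv₀, Complex.conj_ofReal]
    have hdi : (0:ℝ) < d j := lt_of_le_of_ne (hd0 j) (Ne.symm hdj)
    have hs0 : (Real.sqrt (d j) : ℂ) ≠ 0 := by
      simp [Complex.ofReal_ne_zero, Real.sqrt_ne_zero', hdi]
    rw [show ((d j : ℝ) : ℂ) = (Real.sqrt (d j) : ℂ) * (Real.sqrt (d j) : ℂ) by
      rw [← Complex.ofReal_mul, Real.mul_self_sqrt (hd0 j)]]
    field_simp

variable {K H : Type*} [Fintype K] [DecidableEq K] [Fintype H] [DecidableEq H]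

/-- Conjugation by a unitary as an algebra homomorphism. -/
noncomputable def conjAlgHom (V : Matrix K K ℂ) (hV : V ∈ Matrix.unitaryGroup K ℂ) :
    Matrix K K ℂ →ₐ[ℂ] Matrix K K ℂ where
  toFun X := V * X * star V
  map_one' := by
    show V * 1 * star V = 1
    rw [mul_one]; exact Matrix.mem_unitaryGroup_iff.mp hV
  map_mul' X Y := by
    have h := Matrix.mem_unitaryGroup_iff'.mp hV
    calc V * (X * Y) * star V = V * X * (star V * V) * Y * star V := by
          rw [h]; noncomm_ring
      _ = V * X * star V * (V * Y * star V) := by noncomm_ring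
  map_zero' := by simp
  map_add' X Y := by noncomm_ring
  commutes' r := by
    have h := Matrix.mem_unitaryGroup_iff.mp hV
    simp only [Algebra.algebraMap_eq_smul_one]
    rw [mul_smul_comm, mul_one, smul_mul_assoc, h]

lemma aeval_unitary_conj (V : Matrix K K ℂ) (hV : V ∈ Matrix.unitaryGroup K ℂ)
    (d : K → ℂ) (p : Polynomial ℂ) :
    aeval (V * diagonal d * star V) p = V * diagonal (fun i => p.eval (d i)) * star V := by
  have h1 : V * diagonal d * star V = conjAlgHom V hV (diagonal d) := rfl
  rw [h1, Polynomial.aeval_algHom_apply]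
  have h2 : (diagonal d : Matrix K K ℂ) = Matrix.diagonalAlgHom ℂ d := rfl
  rw [h2, Polynomial.aeval_algHom_apply]
  have h3 : (aeval d) p = fun i => p.eval (d i) := by
    funext i
    have := Polynomial.aeval_algHom_apply (Pi.evalAlgHom ℂ (fun _ : K => ℂ) i) d p
    simp only [Pi.evalAlgHom_apply] at this
    rw [← this, Polynomial.aeval_def, Polynomial.eval₂_eq_eval_map, Algebra.algebraMap_self, Polynomial.map_id]
  rw [h3]
  rfl

lemma pow_conjTranspose_mul (A : Matrix H K ℂ) :
    ∀ n : ℕ, (Aᴴ * A) ^ (n + 1) = Aᴴ * (A * Aᴴ) ^ n * A := by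
  intro n
  induction n with
  | zero => simp [pow_succ]
  | succ n ih =>
    rw [pow_succ, ih, pow_succ]
    simp only [Matrix.mul_assoc]

lemma trace_pow_swap (A : Matrix H K ℂ) (n : ℕ) :
    (((A * Aᴴ) ^ (n + 1)).trace) = (((Aᴴ * A) ^ (n + 1)).trace) := by
  rw [pow_conjTranspose_mul, Matrix.trace_mul_cycle, ← pow_succ']

lemma trace_aeval_eq {p : Polynomial ℂ} (hp0 : p.coeff 0 = 0)
    (M₁ : Matrix H H ℂ) (M₂ : Matrix K K ℂ)
    (h : ∀ n : ℕ, ((M₁ ^ (n + 1)).trace) = ((M₂ ^ (n + 1)).trace)) :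
    (aeval M₁ p).trace = (aeval M₂ p).trace := by
  rw [Polynomial.aeval_eq_sum_range' (n := p.natDegree + 1) (Nat.lt_succ_self _),
    Polynomial.aeval_eq_sum_range' (n := p.natDegree + 1) (Nat.lt_succ_self _),
    Matrix.trace_sum, Matrix.trace_sum]
  refine Finset.sum_congr rfl fun i _ => ?_
  rw [Matrix.trace_smul, Matrix.trace_smul]
  cases i with
  | zero => simp [hp0]
  | succ n => rw [h n]

lemma aeval_eq_sqrt {M : Matrix K K ℂ} (hM : M.PosSemidef) (p : Polynomial ℂ)
    (hval : ∀ i, p.eval ((hM.1.eigenvalues i : ℝ) : ℂ) = ((Real.sqrt (hM.1.eigenvalues i) : ℝ) : ℂ)) :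
    aeval M p = hM.sqrt := by
  have hVmem : (hM.1.eigenvectorUnitary : Matrix K K ℂ) ∈ Matrix.unitaryGroup K ℂ :=
    hM.1.eigenvectorUnitary.2
  conv_lhs => rw [hM.1.spectral_theorem, Unitary.conjStarAlgAut_apply]
  rw [aeval_unitary_conj _ hVmem]
  show _ = (hM.1.eigenvectorUnitary : Matrix K K ℂ)
      * diagonal ((↑) ∘ Real.sqrt ∘ hM.1.eigenvalues)
      * star (hM.1.eigenvectorUnitary : Matrix K K ℂ)
  exact congrArg
    (fun D => (hM.1.eigenvectorUnitary : Matrix K K ℂ) * D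
      * star (hM.1.eigenvectorUnitary : Matrix K K ℂ))
    (congrArg diagonal (funext fun i => hval i))

/-- Key spectral fact: `tr √(A Aᴴ) = tr √(Aᴴ A)` for a rectangular matrix. -/
lemma trace_sqrt_swap (A : Matrix H K ℂ) :
    ((Matrix.posSemidef_self_mul_conjTranspose A).sqrt).trace
      = ((Matrix.posSemidef_conjTranspose_mul_self A).sqrt).trace := by
  classical
  set hM₁ := Matrix.posSemidef_self_mul_conjTranspose A
  set hM₂ := Matrix.posSemidef_conjTranspose_mul_self A
  set S : Finset ℝ := (Finset.image hM₁.1.eigenvalues Finset.univ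
    ∪ Finset.image hM₂.1.eigenvalues Finset.univ) ∪ {0} with hS
  set p₀ : Polynomial ℝ := Lagrange.interpolate S id Real.sqrt with hp₀
  have hval : ∀ x ∈ S, p₀.eval x = Real.sqrt x := by
    intro x hx
    exact Lagrange.eval_interpolate_at_node Real.sqrt (Set.injOn_id _) hx
  set pc : Polynomial ℂ := p₀.map (algebraMap ℝ ℂ) with hpc
  have hvalc : ∀ x ∈ S, pc.eval ((x : ℝ) : ℂ) = ((Real.sqrt x : ℝ) : ℂ) := by
    intro x hx
    rw [hpc, Polynomial.eval_map,
      show ((x : ℝ) : ℂ) = algebraMap ℝ ℂ x from rfl, Polynomial.eval₂_hom, hval x hx]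
    rfl
  have hcoeff : pc.coeff 0 = 0 := by
    rw [hpc, Polynomial.coeff_map]
    have h0 : p₀.coeff 0 = 0 := by
      rw [Polynomial.coeff_zero_eq_eval_zero, hval 0 (by simp [hS])]
      exact Real.sqrt_zero
    rw [h0]; simp
  have h₁ : aeval (A * Aᴴ) pc = hM₁.sqrt := by
    refine aeval_eq_sqrt hM₁ pc fun i => hvalc _ ?_
    simp [hS]
  have h₂ : aeval (Aᴴ * A) pc = hM₂.sqrt := by
    refine aeval_eq_sqrt hM₂ pc fun i => hvalc _ ?_
    simp [hS]
  rw [← h₁, ← h₂]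
  exact trace_aeval_eq hcoeff _ _ (trace_pow_swap A)

variable {K H : Type*} [Fintype K] [DecidableEq K] [Fintype H] [DecidableEq H]

lemma sqrt_trace_congr {n : Type*} [Fintype n] [DecidableEq n] {A B : Matrix n n ℂ}
    (h : A = B) (hA : A.PosSemidef) (hB : B.PosSemidef) :
    hA.sqrt.trace = hB.sqrt.trace := by subst h; rfl

lemma trace_real_of_hermitian {M : Matrix K K ℂ} (h : M.IsHermitian) :
    M.trace = ((M.trace.re : ℝ) : ℂ) := by
  have h1 : star M.trace = M.trace := by
    rw [← Matrix.trace_conjTranspose, h.eq]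
  exact ((Complex.conj_eq_iff_re).mp h1).symm

lemma matSqrt_of_posSemidef {n : Type*} [Fintype n] [DecidableEq n] {A : Matrix n n ℂ}
    (hA : A.PosSemidef) : matSqrt A = hA.sqrt := by
  unfold matSqrt
  exact dif_pos hA

/-- Uhlmann-type achievability: a unitary `W` with
`tr (Xᴴ Y W) = F(X Xᴴ, Y Yᴴ)`. -/
lemma uhlmann (X Y : Matrix H K ℂ) :
    ∃ W ∈ Matrix.unitaryGroup K ℂ,
      (Xᴴ * Y * W).trace = ((fidelity (X * Xᴴ) (Y * Yᴴ) : ℝ) : ℂ) := by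
  classical
  have hσ : (X * Xᴴ).PosSemidef := Matrix.posSemidef_self_mul_conjTranspose X
  set s : Matrix H H ℂ := hσ.sqrt with hs
  have hsPSD : s.PosSemidef := hσ.posSemidef_sqrt
  have hsH : sᴴ = s := hsPSD.1
  have hss : s * s = X * Xᴴ := hσ.sqrt_mul_self
  have hτ : (Y * Yᴴ).PosSemidef := Matrix.posSemidef_self_mul_conjTranspose Y
  have h2 : (s * (Y * Yᴴ) * s).PosSemidef := by
    have := hτ.mul_mul_conjTranspose_same s
    rwa [hsH] at this
  obtain ⟨W, hW, htr⟩ := trace_norm_achieves (Xᴴ * Y)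
  refine ⟨W, hW, ?_⟩
  rw [htr]
  have e1 : (Xᴴ * Y)ᴴ * (Xᴴ * Y) = (s * Y)ᴴ * (s * Y) := by
    rw [conjTranspose_mul, conjTranspose_conjTranspose, conjTranspose_mul, hsH]
    calc Yᴴ * X * (Xᴴ * Y) = Yᴴ * (X * Xᴴ * Y) := by
          simp only [Matrix.mul_assoc]
      _ = Yᴴ * (s * (s * Y)) := by rw [← hss]; simp only [Matrix.mul_assoc]
      _ = Yᴴ * s * (s * Y) := by simp only [Matrix.mul_assoc]
  have e2 : (s * Y) * (s * Y)ᴴ = s * (Y * Yᴴ) * s := by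
    rw [conjTranspose_mul, hsH]
    simp only [Matrix.mul_assoc]
  calc ((Matrix.posSemidef_conjTranspose_mul_self (Xᴴ * Y)).sqrt).trace
      = ((Matrix.posSemidef_conjTranspose_mul_self (s * Y)).sqrt).trace :=
        sqrt_trace_congr e1 _ _
    _ = ((Matrix.posSemidef_self_mul_conjTranspose (s * Y)).sqrt).trace :=
        (trace_sqrt_swap (s * Y)).symm
    _ = (h2.sqrt).trace := sqrt_trace_congr e2 _ _
    _ = ((fidelity (X * Xᴴ) (Y * Yᴴ) : ℝ) : ℂ) := by
        have hfid : fidelity (X * Xᴴ) (Y * Yᴴ) = ((h2.sqrt).trace).re := by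
          show ((matSqrt (matSqrt (X * Xᴴ) * (Y * Yᴴ) * matSqrt (X * Xᴴ))).trace).re = _
          rw [matSqrt_of_posSemidef hσ, ← hs, matSqrt_of_posSemidef h2]
        rw [hfid]
        exact trace_real_of_hermitian (h2.posSemidef_sqrt).1

section vecs
variable {α : Type*} [Fintype α]

/-- Hermitian inner product of two finitely supported complex vectors. -/
noncomputable def ip (x y : α → ℂ) : ℂ := star x ⬝ᵥ y

/-- The same vector viewed in Euclidean space. -/
noncomputable def toE (x : α → ℂ) : EuclideanSpace ℂ α := WithLp.toLp 2 x

lemma inner_toE (x y : α → ℂ) : (inner ℂ (toE x) (toE y) : ℂ) = ip x y := by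
  rw [PiLp.inner_apply]
  simp only [toE, PiLp.toLp_apply, RCLike.inner_apply, starRingEnd_apply, ip, dotProduct,
    Pi.star_apply, mul_comm]

lemma normsq_toE (x : α → ℂ) : ‖toE x‖ ^ 2 = (ip x x).re := by
  rw [← inner_toE]
  exact (inner_self_eq_norm_sq (𝕜 := ℂ) (toE x)).symm

lemma toE_sub (x y : α → ℂ) : toE (x - y) = toE x - toE y := rfl

lemma ip_mulVec_left (A : Matrix α α ℂ) (x y : α → ℂ) :
    ip (A *ᵥ x) y = ip x (Aᴴ *ᵥ y) := by
  unfold ip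
  rw [Matrix.star_mulVec, ← Matrix.dotProduct_mulVec]

lemma ip_unitary {A : Matrix α α ℂ} [DecidableEq α] (hA : A ∈ Matrix.unitaryGroup α ℂ)
    (x y : α → ℂ) : ip (A *ᵥ x) (A *ᵥ y) = ip x y := by
  rw [ip_mulVec_left, Matrix.mulVec_mulVec,
    show Aᴴ * A = 1 from Matrix.mem_unitaryGroup_iff'.mp hA, Matrix.one_mulVec]

lemma norm_toE_unitary {A : Matrix α α ℂ} [DecidableEq α] (hA : A ∈ Matrix.unitaryGroup α ℂ)
    (x : α → ℂ) : ‖toE (A *ᵥ x)‖ = ‖toE x‖ := by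
  have h1 : ‖toE (A *ᵥ x)‖ ^ 2 = ‖toE x‖ ^ 2 := by
    rw [normsq_toE, normsq_toE, ip_unitary hA]
  nlinarith [norm_nonneg (toE (A *ᵥ x)), norm_nonneg (toE x)]

end vecs

section extend
variable {Vt Mt Pt : Type*} [Fintype Vt] [Fintype Mt] [Fintype Pt]
  [DecidableEq Vt] [DecidableEq Mt] [DecidableEq Pt]

lemma extendVM_mul (A B : Matrix (Vt × Mt) (Vt × Mt) ℂ) :
    extendVM (Pt := Pt) (A * B) = extendVM A * extendVM B := by
  ext ⟨v, m, p⟩ ⟨v', m', p'⟩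
  simp only [extendVM, Matrix.mul_apply, Fintype.sum_prod_type]
  simp only [mul_ite, mul_one, mul_zero, ite_mul, zero_mul, Finset.sum_ite_eq,
    Finset.mem_univ, if_true]
  by_cases hp : p = p'
  · subst hp; simp
  · rw [if_neg hp]
    symm
    refine Finset.sum_eq_zero fun a _ => Finset.sum_eq_zero fun b _ =>
      Finset.sum_eq_zero fun c _ => ?_
    by_cases hc : c = p'
    · subst hc; simp [hp]
    · simp [hc]

lemma extendVM_conjTranspose (A : Matrix (Vt × Mt) (Vt × Mt) ℂ) :
    (extendVM (Pt := Pt) A)ᴴ = extendVM Aᴴ := by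
  ext ⟨v, m, p⟩ ⟨v', m', p'⟩
  simp only [extendVM, Matrix.conjTranspose_apply]
  by_cases h : p = p'
  · subst h; simp
  · rw [if_neg h, if_neg (fun hh => h hh.symm)]
    simp

lemma extendVM_one : extendVM (Pt := Pt) (1 : Matrix (Vt × Mt) (Vt × Mt) ℂ) = 1 := by
  ext ⟨v, m, p⟩ ⟨v', m', p'⟩
  simp only [extendVM, Matrix.one_apply, Prod.mk.injEq]
  by_cases h1 : v = v' <;> by_cases h2 : m = m' <;> by_cases h3 : p = p' <;>
    simp [h1, h2, h3]

lemma extendVM_mem_unitary {A : Matrix (Vt × Mt) (Vt × Mt) ℂ}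
    (hA : A ∈ Matrix.unitaryGroup (Vt × Mt) ℂ) :
    extendVM (Pt := Pt) A ∈ Matrix.unitaryGroup (Vt × Mt × Pt) ℂ := by
  rw [Matrix.mem_unitaryGroup_iff']
  show (extendVM A)ᴴ * extendVM A = 1
  rw [extendVM_conjTranspose, ← extendVM_mul,
    show Aᴴ * A = 1 from Matrix.mem_unitaryGroup_iff'.mp hA, extendVM_one]

lemma extendMP_mul (A B : Matrix (Mt × Pt) (Mt × Pt) ℂ) :
    extendMP (Vt := Vt) (A * B) = extendMP A * extendMP B := by
  ext ⟨v, m, p⟩ ⟨v', m', p'⟩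
  simp only [extendMP, Matrix.mul_apply, Fintype.sum_prod_type]
  simp only [ite_mul, one_mul, zero_mul, mul_ite, mul_zero, Finset.sum_ite_eq,
    Finset.mem_univ, if_true]
  by_cases h : v = v'
  · subst h; simp
  · rw [if_neg h]
    symm
    refine Finset.sum_eq_zero fun a _ => Finset.sum_eq_zero fun b _ =>
      Finset.sum_eq_zero fun c _ => ?_
    by_cases ha : a = v'
    · subst ha; simp [h]
    · simp [ha]

lemma extendMP_conjTranspose (A : Matrix (Mt × Pt) (Mt × Pt) ℂ) :
    (extendMP (Vt := Vt) A)ᴴ = extendMP Aᴴ := by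
  ext ⟨v, m, p⟩ ⟨v', m', p'⟩
  simp only [extendMP, Matrix.conjTranspose_apply]
  by_cases h : v = v'
  · subst h; simp
  · rw [if_neg h, if_neg (fun hh => h hh.symm)]
    simp

lemma extendMP_one : extendMP (Vt := Vt) (1 : Matrix (Mt × Pt) (Mt × Pt) ℂ) = 1 := by
  ext ⟨v, m, p⟩ ⟨v', m', p'⟩
  simp only [extendMP, Matrix.one_apply, Prod.mk.injEq]
  by_cases h1 : v = v' <;> by_cases h2 : m = m' <;> by_cases h3 : p = p' <;>
    simp [h1, h2, h3]

lemma extendMP_mem_unitary {A : Matrix (Mt × Pt) (Mt × Pt) ℂ}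
    (hA : A ∈ Matrix.unitaryGroup (Mt × Pt) ℂ) :
    extendMP (Vt := Vt) A ∈ Matrix.unitaryGroup (Vt × Mt × Pt) ℂ := by
  rw [Matrix.mem_unitaryGroup_iff']
  show (extendMP A)ᴴ * extendMP A = 1
  rw [extendMP_conjTranspose, ← extendMP_mul,
    show Aᴴ * A = 1 from Matrix.mem_unitaryGroup_iff'.mp hA, extendMP_one]

lemma transpose_mem_unitary {n : Type*} [Fintype n] [DecidableEq n]
    {A : Matrix n n ℂ} (hA : A ∈ Matrix.unitaryGroup n ℂ) :
    Aᵀ ∈ Matrix.unitaryGroup n ℂ := by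
  rw [Matrix.mem_unitaryGroup_iff']
  have h : A * Aᴴ = 1 := Matrix.mem_unitaryGroup_iff.mp hA
  calc star Aᵀ * Aᵀ = (A * Aᴴ)ᵀ := by
        rw [Matrix.transpose_mul]
        rfl
    _ = 1 := by rw [h, Matrix.transpose_one]

end extend


section sums
variable {a b c : Type*} [Fintype a] [Fintype b] [Fintype c]
variable {M : Type*} [AddCommMonoid M]

lemma sum_rot3 (f : a → b → c → M) :
    ∑ x, ∑ y, ∑ z, f x y z = ∑ z, ∑ x, ∑ y, f x y z := by
  calc ∑ x, ∑ y, ∑ z, f x y z = ∑ x, ∑ z, ∑ y, f x y z :=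
        Finset.sum_congr rfl fun x _ => Finset.sum_comm
    _ = ∑ z, ∑ x, ∑ y, f x y z := Finset.sum_comm

lemma sum_rot3' (f : a → b → c → M) :
    ∑ x, ∑ y, ∑ z, f x y z = ∑ y, ∑ z, ∑ x, f x y z := by
  calc ∑ x, ∑ y, ∑ z, f x y z = ∑ y, ∑ x, ∑ z, f x y z := Finset.sum_comm
    _ = ∑ y, ∑ z, ∑ x, f x y z := Finset.sum_congr rfl fun y _ => Finset.sum_comm

end sums

section ptp
variable {Vt Mt Pt : Type*} [Fintype Vt] [Fintype Mt] [Fintype Pt]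
  [DecidableEq Vt] [DecidableEq Mt] [DecidableEq Pt]

/-- Partial trace (over `P`) of the outer product of a vector on `V ⊗ M ⊗ P`. -/
noncomputable def ptP (z : Vt × Mt × Pt → ℂ) : Matrix (Vt × Mt) (Vt × Mt) ℂ :=
  fun c c' => ∑ p, z (c.1, c.2, p) * star (z (c'.1, c'.2, p))

/-- Matrix form of a vector on `(V ⊗ M) ⊗ P`. -/
def matP (z : Vt × Mt × Pt → ℂ) : Matrix (Vt × Mt) Pt ℂ := fun c p => z (c.1, c.2, p)

/-- Matrix form of a vector on `V ⊗ (M ⊗ P)`. -/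
def matv (z : Vt × Mt × Pt → ℂ) : Matrix Vt (Mt × Pt) ℂ := fun v k => z (v, k)

lemma ptP_eq (z : Vt × Mt × Pt → ℂ) : ptP z = matP z * (matP z)ᴴ := by
  ext c c'
  simp only [ptP, matP, Matrix.mul_apply, Matrix.conjTranspose_apply]

lemma matP_extendVM (A : Matrix (Vt × Mt) (Vt × Mt) ℂ) (z : Vt × Mt × Pt → ℂ) :
    matP (extendVM A *ᵥ z) = A * matP z := by
  ext c p
  simp only [matP, extendVM, Matrix.mulVec, dotProduct, Matrix.mul_apply]
  rw [Fintype.sum_prod_type, Fintype.sum_prod_type]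
  refine Finset.sum_congr rfl fun v' _ => ?_
  rw [Fintype.sum_prod_type]
  refine Finset.sum_congr rfl fun m' _ => ?_
  simp [mul_ite, ite_mul, mul_one, mul_zero, zero_mul, Finset.sum_ite_eq]

lemma ptP_extendVM (A : Matrix (Vt × Mt) (Vt × Mt) ℂ) (z : Vt × Mt × Pt → ℂ) :
    ptP (extendVM A *ᵥ z) = A * ptP z * Aᴴ := by
  rw [ptP_eq, matP_extendVM, Matrix.conjTranspose_mul, ptP_eq]
  simp only [Matrix.mul_assoc]

lemma ip_eq_trace_matP (x y : Vt × Mt × Pt → ℂ) :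
    ip x y = ((matP x)ᴴ * matP y).trace := by
  unfold ip Matrix.trace
  simp only [dotProduct, Pi.star_apply, Matrix.diag_apply, Matrix.mul_apply,
    Matrix.conjTranspose_apply, matP, Fintype.sum_prod_type]
  exact sum_rot3 _

lemma ip_self_eq_trace_ptP (z : Vt × Mt × Pt → ℂ) : ip z z = (ptP z).trace := by
  rw [ip_eq_trace_matP, ptP_eq, ← Matrix.trace_mul_comm]

lemma ip_extendVM (A : Matrix (Vt × Mt) (Vt × Mt) ℂ) (z : Vt × Mt × Pt → ℂ) :
    ip z (extendVM A *ᵥ z) = (A * ptP z).trace := by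
  rw [ip_eq_trace_matP, matP_extendVM, ptP_eq, ← Matrix.mul_assoc,
    Matrix.trace_mul_cycle, ← Matrix.mul_assoc, Matrix.trace_mul_comm, Matrix.mul_assoc]

lemma matv_mul_conjTranspose (z : Vt × Mt × Pt → ℂ) :
    matv z * (matv z)ᴴ = ptraceRight (ptP z) := by
  ext v v'
  simp only [matv, ptraceRight, ptP, Matrix.mul_apply, Matrix.conjTranspose_apply]
  rw [Fintype.sum_prod_type]

lemma ip_eq_trace_matv (x y : Vt × Mt × Pt → ℂ) :
    ip x y = ((matv x)ᴴ * matv y).trace := by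
  unfold ip Matrix.trace
  simp only [dotProduct, Pi.star_apply, Matrix.diag_apply, Matrix.mul_apply,
    Matrix.conjTranspose_apply, matv, Fintype.sum_prod_type]
  exact sum_rot3' _

lemma matv_extendMP (U : Matrix (Mt × Pt) (Mt × Pt) ℂ) (y : Vt × Mt × Pt → ℂ) :
    matv (extendMP U *ᵥ y) = matv y * Uᵀ := by
  ext v k
  simp only [matv, extendMP, Matrix.mulVec, dotProduct, Matrix.mul_apply,
    Matrix.transpose_apply, Fintype.sum_prod_type]
  simp only [ite_mul, one_mul, zero_mul, mul_ite, mul_zero, Finset.sum_ite_eq,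
    Finset.mem_univ, if_true]
  refine (Finset.sum_eq_single v (fun x _ hx => ?_)
      (fun h => absurd (Finset.mem_univ v) h)).trans ?_
  · exact Finset.sum_eq_zero fun m' _ => Finset.sum_eq_zero fun p' _ => by
      rw [if_neg (fun hh => hx hh.symm)]
  · simp only [if_pos rfl]
    exact Finset.sum_congr rfl fun m' _ => Finset.sum_congr rfl fun p' _ => mul_comm _ _

lemma ip_extendMP (U : Matrix (Mt × Pt) (Mt × Pt) ℂ) (x y : Vt × Mt × Pt → ℂ) :
    ip x (extendMP U *ᵥ y) = ((matv x)ᴴ * matv y * Uᵀ).trace := by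
  rw [ip_eq_trace_matv, matv_extendMP, Matrix.mul_assoc]

end ptp

section purif
variable {Vt Mt : Type*} [Fintype Vt] [Fintype Mt] [DecidableEq Vt] [DecidableEq Mt]

lemma ptP_purif {ρ : Matrix (Vt × Mt) (Vt × Mt) ℂ} (h : ρ.PosSemidef) :
    ptP (fun q : Vt × Mt × (Vt × Mt) => matSqrt ρ (q.1, q.2.1) q.2.2) = ρ := by
  ext c c'
  simp only [ptP, matSqrt_of_posSemidef h]
  have key : h.sqrt * (h.sqrt)ᴴ = ρ := by
    rw [h.posSemidef_sqrt.1, h.sqrt_mul_self]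
  have h2 := congrFun (congrFun key c) c'
  rw [Matrix.mul_apply] at h2
  simp only [Matrix.conjTranspose_apply] at h2
  exact h2

lemma outer_mul_outer_self {ι : Type*} [Fintype ι] (v : ι → ℂ)
    (h : ∑ c, v c * star (v c) = 1) : outer v * outer v = outer v := by
  ext a b
  simp only [outer, Matrix.mul_apply]
  calc ∑ c, v a * star (v c) * (v c * star (v b))
      = (∑ c, v c * star (v c)) * (v a * star (v b)) := by
        rw [Finset.sum_mul]
        exact Finset.sum_congr rfl fun c _ => by ring
    _ = v a * star (v b) := by rw [h, one_mul]

lemma trace_outer {ι : Type*} [Fintype ι] [DecidableEq ι] (v : ι → ℂ) :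
    (outer v).trace = ∑ c, v c * star (v c) := rfl

end purif

/-- Quantitative instantiation of the fidelity-sum lemma in the soundness analysis of
the three-message parallelized protocol: with `k = m/2 + 1`, soundness bound `1 - δ`,
and `tr(Π V_k ρ_{m/2+1} V_k†) ≥ 1 - δ/4`, one gets
`Σ_{j=1}^{m/2} F(tr_M V_j ρ_j V_j†, tr_M ρ_{j+1}) ≤ m/2 - δ²/(16m)`. -/
theorem fidelity_sum_instantiation {Vt Mt : Type} [Fintype Vt] [Fintype Mt]
    [DecidableEq Vt] [DecidableEq Mt] [Inhabited Vt] [Inhabited Mt]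
    (m : ℕ) (hm : 4 ≤ m) (hmeven : Even m)
    (δ : ℝ) (hδ0 : 0 ≤ δ) (hδ1 : δ ≤ 1)
    (Vs : ℕ → Matrix (Vt × Mt) (Vt × Mt) ℂ)
    (hVs : ∀ j, Vs j ∈ Matrix.unitaryGroup (Vt × Mt) ℂ)
    (Pr : Matrix (Vt × Mt) (Vt × Mt) ℂ)
    (hPrH : Pr.IsHermitian) (hPrP : Pr * Pr = Pr)
    (hsound : ∀ (Pt : Type) [Fintype Pt] [DecidableEq Pt] [Inhabited Pt]
      (Ps : ℕ → Matrix (Mt × Pt) (Mt × Pt) ℂ),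
      (∀ j, Ps j ∈ Matrix.unitaryGroup (Mt × Pt) ℂ) →
      ∑ p : Vt × Mt × Pt,
        Complex.normSq (((extendVM Pr).mulVec (chainState Vs Ps (m / 2 + 1))) p) ≤ 1 - δ)
    (ρ : ℕ → Matrix (Vt × Mt) (Vt × Mt) ℂ)
    (hρ : ∀ j ∈ Finset.Icc 1 (m / 2 + 1), (ρ j).PosSemidef ∧ (ρ j).trace = 1)
    (hρ1 : ρ 1 = outer (fun p => if p = default then 1 else 0))
    (hlast : ((Pr * (Vs (m / 2 + 1) * ρ (m / 2 + 1) * (Vs (m / 2 + 1))ᴴ)).trace).re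
        ≥ 1 - δ/4) :
    ∑ j ∈ Finset.Icc 1 (m / 2),
        fidelity (ptraceRight (Vs j * ρ j * (Vs j)ᴴ)) (ptraceRight (ρ (j+1)))
      ≤ (m : ℝ) / 2 - δ^2 / (16 * m) := by
  classical
  -- abbreviations
  set u : ℕ → (Vt × Mt × (Vt × Mt) → ℂ) :=
    fun j q => matSqrt (ρ j) (q.1, q.2.1) q.2.2 with hu
  set w : ℕ → (Vt × Mt × (Vt × Mt) → ℂ) :=
    fun j => (extendVM (Vs j)) *ᵥ (u j) with hw
  have hwj : ∀ j, w j = extendVM (Vs j) *ᵥ u j := fun _ => rfl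
  have hρPSD : ∀ j ∈ Finset.Icc 1 (m / 2 + 1), (ρ j).PosSemidef := fun j hj => (hρ j hj).1
  have hρtr : ∀ j ∈ Finset.Icc 1 (m / 2 + 1), (ρ j).trace = 1 := fun j hj => (hρ j hj).2
  have humat : ∀ j ∈ Finset.Icc 1 (m / 2 + 1), ptP (u j) = ρ j := by
    intro j hj
    exact ptP_purif (hρPSD j hj)
  have hipu : ∀ j ∈ Finset.Icc 1 (m / 2 + 1), ip (u j) (u j) = 1 := by
    intro j hj
    rw [ip_self_eq_trace_ptP, humat j hj, hρtr j hj]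
  have hipw : ∀ j ∈ Finset.Icc 1 (m / 2 + 1), ip (w j) (w j) = 1 := by
    intro j hj
    rw [hwj j, ip_unitary (extendVM_mem_unitary (hVs j))]
    exact hipu j hj
  -- fidelity shorthand
  set F : ℕ → ℝ :=
    fun j => fidelity (ptraceRight (Vs j * ρ j * (Vs j)ᴴ)) (ptraceRight (ρ (j+1))) with hF
  -- Uhlmann choice of prover unitaries
  have hexists : ∀ j, ∃ P, P ∈ Matrix.unitaryGroup (Mt × (Vt × Mt)) ℂ ∧
      (j ∈ Finset.Icc 1 (m / 2) →
        ip (extendMP P *ᵥ w j) (u (j+1)) = ((F j : ℝ) : ℂ)) := by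
    intro j
    by_cases hj : j ∈ Finset.Icc 1 (m / 2)
    · have hjk : j ∈ Finset.Icc 1 (m / 2 + 1) := by
        rw [Finset.mem_Icc] at *
        omega
      have hjk1 : j + 1 ∈ Finset.Icc 1 (m / 2 + 1) := by
        rw [Finset.mem_Icc] at *
        omega
      obtain ⟨W, hW, htr⟩ := uhlmann (matv (w j)) (matv (u (j+1)))
      refine ⟨(Wᵀ)ᴴ, Unitary.star_mem (transpose_mem_unitary hW), fun _ => ?_⟩
      rw [ip_mulVec_left, extendMP_conjTranspose, Matrix.conjTranspose_conjTranspose,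
        ip_extendMP, Matrix.transpose_transpose, htr]
      congr 1
      have hA1 : matv (w j) * (matv (w j))ᴴ = ptraceRight (Vs j * ρ j * (Vs j)ᴴ) := by
        rw [matv_mul_conjTranspose]
        show ptraceRight (ptP (extendVM (Vs j) *ᵥ u j)) = _
        rw [ptP_extendVM, humat j hjk]
      have hA2 : matv (u (j+1)) * (matv (u (j+1)))ᴴ = ptraceRight (ρ (j+1)) := by
        rw [matv_mul_conjTranspose, humat (j+1) hjk1]
      rw [hA1, hA2]
    · exact ⟨1, one_mem _, fun h => absurd h hj⟩
  choose Ps hPsU hPsF using hexists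
  -- error per step
  set e : ℕ → ℝ := fun j => ‖toE (extendMP (Ps j) *ᵥ w j) - toE (u (j+1))‖ with he
  have he0 : ∀ j, 0 ≤ e j := fun j => norm_nonneg _
  have he2 : ∀ j ∈ Finset.Icc 1 (m / 2), (e j)^2 = 2 - 2 * F j := by
    intro j hj
    have hjk : j ∈ Finset.Icc 1 (m / 2 + 1) := by
      rw [Finset.mem_Icc] at *
      omega
    have hjk1 : j + 1 ∈ Finset.Icc 1 (m / 2 + 1) := by
      rw [Finset.mem_Icc] at *
      omega
    rw [he]
    rw [norm_sub_sq (𝕜 := ℂ)]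
    have h1 : ‖toE (extendMP (Ps j) *ᵥ w j)‖ ^ 2 = 1 := by
      rw [normsq_toE, ip_unitary (extendMP_mem_unitary (hPsU j)), hipw j hjk]
      rfl
    have h2 : ‖toE (u (j+1))‖ ^ 2 = 1 := by
      rw [normsq_toE, hipu (j+1) hjk1]
      rfl
    have h3 : RCLike.re (inner ℂ (toE (extendMP (Ps j) *ᵥ w j)) (toE (u (j+1))) : ℂ) = F j := by
      rw [inner_toE, hPsF j hj]
      rfl
    rw [h1, h2, h3]
    ring
  -- chain closeness
  have hchain : ∀ j, 1 ≤ j → j ≤ m / 2 + 1 →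
      ‖toE (chainState Vs Ps j) - toE (w j)‖ ≤ ∑ i ∈ Finset.Icc 1 (j-1), e i := by
    intro j
    induction j with
    | zero => intro h; omega
    | succ n ihn =>
      intro h1 h2
      by_cases hn : n = 0
      · subst hn
        -- base case j = 1
        have hmem1 : 1 ∈ Finset.Icc 1 (m / 2 + 1) := by
          rw [Finset.mem_Icc]; omega
        have hu1 : u 1 = (fun p : Vt × Mt × (Vt × Mt) => if p = default then 1 else 0) := by
          have hPSD := hρPSD 1 hmem1
          have htrace : ∑ c, (fun p : Vt × Mt => if p = default then (1:ℂ) else 0) c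
              * star ((fun p : Vt × Mt => if p = default then (1:ℂ) else 0) c) = 1 := by
            have := hρtr 1 hmem1
            rw [hρ1, trace_outer] at this
            exact this
          have hsq : ρ 1 ^ 2 = ρ 1 := by
            rw [pow_two, hρ1]
            exact outer_mul_outer_self _ htrace
          have hsqrt : ρ 1 = hPSD.sqrt := hPSD.eq_sqrt_of_sq_eq hPSD hsq
          have hms : matSqrt (ρ 1) = ρ 1 := by
            rw [matSqrt_of_posSemidef hPSD, ← hsqrt]
          funext q
          obtain ⟨v, mm, p⟩ := q
          show matSqrt (ρ 1) (v, mm) p = _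
          rw [hms, hρ1]
          show (if (v, mm) = default then (1:ℂ) else 0)
              * star (if p = default then (1:ℂ) else 0) = _
          have hd1 : (default : Vt × Mt) = (default, default) := rfl
          have hd2 : (default : Vt × Mt × (Vt × Mt))
              = (default, (default, (default, default))) := rfl
          by_cases h1 : v = default <;> by_cases h2 : mm = default
            <;> by_cases h3 : p = default <;>
            simp [h1, h2, h3, hd1, hd2, Prod.ext_iff]
        have hcs1 : chainState Vs Ps 1
            = extendVM (Vs 1) *ᵥ (fun p : Vt × Mt × (Vt × Mt) => if p = default then 1 else 0) :=
          rfl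
        rw [hcs1, hwj 1, hu1]
        have hempty : Finset.Icc 1 0 = (∅ : Finset ℕ) := Finset.Icc_eq_empty (by omega)
        rw [hempty]
        simp
      · have hn1 : 1 ≤ n := Nat.one_le_iff_ne_zero.mpr hn
        have hnk : n ≤ m / 2 + 1 := by omega
        have ihb := ihn hn1 hnk
        obtain ⟨n', rfl⟩ : ∃ n', n = n' + 1 := ⟨n-1, by omega⟩
        have hstep : chainState Vs Ps (n'+2) = extendVM (Vs (n'+2)) *ᵥ
            (extendMP (Ps (n'+1)) *ᵥ chainState Vs Ps (n'+1)) := rfl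
        have hkey : ‖toE (chainState Vs Ps (n'+2)) - toE (w (n'+2))‖
            = ‖toE (extendMP (Ps (n'+1)) *ᵥ chainState Vs Ps (n'+1)) - toE (u (n'+2))‖ := by
          rw [hstep, hwj (n'+2)]
          rw [← toE_sub, ← Matrix.mulVec_sub,
            norm_toE_unitary (extendVM_mem_unitary (hVs (n'+2))), toE_sub]
        have htri : ‖toE (extendMP (Ps (n'+1)) *ᵥ chainState Vs Ps (n'+1)) - toE (u (n'+2))‖
            ≤ ‖toE (extendMP (Ps (n'+1)) *ᵥ chainState Vs Ps (n'+1))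
                - toE (extendMP (Ps (n'+1)) *ᵥ w (n'+1))‖
              + ‖toE (extendMP (Ps (n'+1)) *ᵥ w (n'+1)) - toE (u (n'+2))‖ := by
          have := norm_add_le
            (toE (extendMP (Ps (n'+1)) *ᵥ chainState Vs Ps (n'+1))
              - toE (extendMP (Ps (n'+1)) *ᵥ w (n'+1)))
            (toE (extendMP (Ps (n'+1)) *ᵥ w (n'+1)) - toE (u (n'+2)))
          rwa [sub_add_sub_cancel] at this
        have hfirst : ‖toE (extendMP (Ps (n'+1)) *ᵥ chainState Vs Ps (n'+1))
            - toE (extendMP (Ps (n'+1)) *ᵥ w (n'+1))‖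
            = ‖toE (chainState Vs Ps (n'+1)) - toE (w (n'+1))‖ := by
          rw [← toE_sub, ← Matrix.mulVec_sub,
            norm_toE_unitary (extendMP_mem_unitary (hPsU (n'+1))), toE_sub]
        have hsecond : ‖toE (extendMP (Ps (n'+1)) *ᵥ w (n'+1)) - toE (u (n'+2))‖ = e (n'+1) :=
          rfl
        have hsum : ∑ i ∈ Finset.Icc 1 (n'+2-1), e i
            = (∑ i ∈ Finset.Icc 1 n', e i) + e (n'+1) := by
          have : n'+2-1 = n'+1 := rfl
          rw [this, Finset.sum_Icc_succ_top (by omega : 1 ≤ n'+1)]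
        rw [hkey, hsum]
        have : n' + 1 - 1 = n' := rfl
        rw [this] at ihb
        calc ‖toE (extendMP (Ps (n'+1)) *ᵥ chainState Vs Ps (n'+1)) - toE (u (n'+2))‖
            ≤ _ + _ := htri
          _ ≤ (∑ i ∈ Finset.Icc 1 n', e i) + e (n'+1) := by
              rw [hfirst, hsecond]
              exact add_le_add_left ihb _
  -- projector facts
  set Pi' : Matrix (Vt × Mt × (Vt × Mt)) (Vt × Mt × (Vt × Mt)) ℂ :=
    extendVM Pr with hPi
  have hPiH : Pi'ᴴ = Pi' := by
    rw [hPi, extendVM_conjTranspose, hPrH.eq]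
  have hPiP : Pi' * Pi' = Pi' := by
    rw [hPi, ← extendVM_mul, hPrP]
  have hproj : ∀ z, ip (Pi' *ᵥ z) (Pi' *ᵥ z) = ip z (Pi' *ᵥ z) := by
    intro z
    rw [ip_mulVec_left, Matrix.mulVec_mulVec, hPiH, hPiP]
  have hcontr : ∀ z, ‖toE (Pi' *ᵥ z)‖ ≤ ‖toE z‖ := by
    intro z
    have h1 : ‖toE (Pi' *ᵥ z)‖^2 = RCLike.re (ip z (Pi' *ᵥ z)) := by
      rw [normsq_toE, hproj]
      rfl
    have h2 : RCLike.re (ip z (Pi' *ᵥ z)) ≤ ‖toE z‖ * ‖toE (Pi' *ᵥ z)‖ := by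
      rw [← inner_toE]
      exact re_inner_le_norm _ _
    nlinarith [norm_nonneg (toE (Pi' *ᵥ z)), norm_nonneg (toE z)]
  -- the sum of errors
  set c : ℝ := ∑ i ∈ Finset.Icc 1 (m / 2), e i with hcdef
  have hc0 : 0 ≤ c := Finset.sum_nonneg fun i _ => he0 i
  have hmemk : m / 2 + 1 ∈ Finset.Icc 1 (m / 2 + 1) := by
    rw [Finset.mem_Icc]; omega
  have hchaink := hchain (m / 2 + 1) (by omega) le_rfl
  have hchain2 : ‖toE (chainState Vs Ps (m / 2 + 1)) - toE (w (m / 2 + 1))‖ ≤ c := by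
    have : m / 2 + 1 - 1 = m / 2 := rfl
    rwa [this] at hchaink
  -- lower bound for the projected ideal state
  have hnormPiw : Real.sqrt (1 - δ/4) ≤ ‖toE (Pi' *ᵥ w (m / 2 + 1))‖ := by
    have h2 : ip (w (m / 2 + 1)) (Pi' *ᵥ w (m / 2 + 1))
        = (Pr * (Vs (m / 2 + 1) * ρ (m / 2 + 1) * (Vs (m / 2 + 1))ᴴ)).trace := by
      rw [hwj (m / 2 + 1), hPi, ip_extendVM, ptP_extendVM, humat (m / 2 + 1) hmemk]
    have h1 : ‖toE (Pi' *ᵥ w (m / 2 + 1))‖^2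
        = ((Pr * (Vs (m / 2 + 1) * ρ (m / 2 + 1) * (Vs (m / 2 + 1))ᴴ)).trace).re := by
      rw [normsq_toE, hproj, h2]
    have h3 : 1 - δ/4 ≤ ‖toE (Pi' *ᵥ w (m / 2 + 1))‖^2 := by
      rw [h1]; exact hlast
    calc Real.sqrt (1 - δ/4) ≤ Real.sqrt (‖toE (Pi' *ᵥ w (m / 2 + 1))‖^2) :=
          Real.sqrt_le_sqrt h3
      _ = ‖toE (Pi' *ᵥ w (m / 2 + 1))‖ := Real.sqrt_sq (norm_nonneg _)
  -- lower bound for the actual state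
  have hlow : Real.sqrt (1 - δ/4) - c ≤ ‖toE (Pi' *ᵥ chainState Vs Ps (m / 2 + 1))‖ := by
    have htri : ‖toE (Pi' *ᵥ w (m / 2 + 1))‖
        ≤ ‖toE (Pi' *ᵥ chainState Vs Ps (m / 2 + 1))‖
          + ‖toE (Pi' *ᵥ w (m / 2 + 1)) - toE (Pi' *ᵥ chainState Vs Ps (m / 2 + 1))‖ := by
      have := norm_add_le
        (toE (Pi' *ᵥ chainState Vs Ps (m / 2 + 1)))
        (toE (Pi' *ᵥ w (m / 2 + 1)) - toE (Pi' *ᵥ chainState Vs Ps (m / 2 + 1)))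
      rwa [add_sub_cancel] at this
    have hdiff : ‖toE (Pi' *ᵥ w (m / 2 + 1)) - toE (Pi' *ᵥ chainState Vs Ps (m / 2 + 1))‖
        ≤ c := by
      rw [← toE_sub, ← Matrix.mulVec_sub]
      calc ‖toE (Pi' *ᵥ (w (m / 2 + 1) - chainState Vs Ps (m / 2 + 1)))‖
          ≤ ‖toE (w (m / 2 + 1) - chainState Vs Ps (m / 2 + 1))‖ := hcontr _
        _ = ‖toE (chainState Vs Ps (m / 2 + 1)) - toE (w (m / 2 + 1))‖ := by
            rw [toE_sub, norm_sub_rev]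
        _ ≤ c := hchain2
    linarith [hnormPiw]
  -- soundness upper bound
  have hupper : ‖toE (Pi' *ᵥ chainState Vs Ps (m / 2 + 1))‖^2 ≤ 1 - δ := by
    have h0 := hsound (Vt × Mt) Ps (fun j => hPsU j)
    have heq : ∑ p : Vt × Mt × (Vt × Mt),
        Complex.normSq (((extendVM Pr).mulVec (chainState Vs Ps (m / 2 + 1))) p)
        = ‖toE (Pi' *ᵥ chainState Vs Ps (m / 2 + 1))‖^2 := by
      rw [normsq_toE]
      unfold ip dotProduct
      rw [Complex.re_sum]
      refine Finset.sum_congr rfl fun p _ => ?_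
      rw [Pi.star_apply, Complex.star_def, mul_comm, Complex.mul_conj, Complex.ofReal_re]
    rw [← heq]
    exact h0
  -- final contradiction argument
  by_contra hcon
  push_neg at hcon
  replace hcon : (m:ℝ)/2 - δ^2/(16*m) < ∑ j ∈ Finset.Icc 1 (m / 2), F j := hcon
  obtain ⟨t, ht⟩ := hmeven
  have ht2 : m = 2 * t := by omega
  have hm2 : m / 2 = t := by omega
  have htpos : 2 ≤ t := by omega
  have hmr : (m:ℝ) = 2 * (t:ℝ) := by exact_mod_cast ht2
  have htr : ((m / 2 : ℕ) : ℝ) = (t:ℝ) := by exact_mod_cast hm2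
  have hcard : (Finset.Icc 1 (m / 2)).card = m / 2 := by
    rw [Nat.card_Icc]
    omega
  have hsum_e2 : ∑ j ∈ Finset.Icc 1 (m / 2), (e j)^2
      = 2 * ((m / 2 : ℕ) : ℝ) - 2 * ∑ j ∈ Finset.Icc 1 (m / 2), F j := by
    rw [Finset.sum_congr rfl he2]
    rw [Finset.sum_sub_distrib, Finset.sum_const, hcard, ← Finset.mul_sum]
    push_cast
    ring
  have hc2 : c^2 ≤ ((m / 2 : ℕ) : ℝ) * ∑ j ∈ Finset.Icc 1 (m / 2), (e j)^2 := by
    have := sq_sum_le_card_mul_sum_sq (s := Finset.Icc 1 (m / 2)) (f := e)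
    rw [hcard] at this
    exact this
  have hmpos : (0:ℝ) < m := by
    have : (0:ℕ) < m := by omega
    exact_mod_cast this
  have htpos' : (0:ℝ) < t := by
    have : (0:ℕ) < t := by omega
    exact_mod_cast this
  have hc2' : c^2 < δ^2 / 16 := by
    have h1 : c^2 < (t:ℝ) * (2 * t - 2 * ((m:ℝ)/2 - δ^2/(16*m))) := by
      rw [hsum_e2, htr] at hc2
      nlinarith [hcon, htpos']
    have h2 : (t:ℝ) * (2 * t - 2 * ((m:ℝ)/2 - δ^2/(16*m))) = δ^2/16 := by
      rw [hmr]
      field_simp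
      ring
    linarith [h1, h2.symm.le]
  have hcδ : c < δ/4 := by
    nlinarith [hc0, hδ0]
  have hs1 : δ/4 ≤ Real.sqrt (1 - δ/4) - Real.sqrt (1 - δ) := by
    have h1 : Real.sqrt (1-δ/4)^2 = 1-δ/4 := Real.sq_sqrt (by linarith)
    have h2 : Real.sqrt (1-δ)^2 = 1-δ := Real.sq_sqrt (by linarith)
    have h3 : Real.sqrt (1-δ/4) ≤ 1 := Real.sqrt_le_one.mpr (by linarith)
    have h4 : Real.sqrt (1-δ) ≤ Real.sqrt (1-δ/4) := Real.sqrt_le_sqrt (by linarith)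
    have h5 : 0 ≤ Real.sqrt (1-δ) := Real.sqrt_nonneg _
    nlinarith
  have hfin : Real.sqrt (1-δ) < ‖toE (Pi' *ᵥ chainState Vs Ps (m / 2 + 1))‖ := by
    have : Real.sqrt (1-δ) + c < Real.sqrt (1-δ/4) := by linarith
    linarith [hlow]
  have hfin2 : 1 - δ < ‖toE (Pi' *ᵥ chainState Vs Ps (m / 2 + 1))‖^2 := by
    have h5 : 0 ≤ Real.sqrt (1-δ) := Real.sqrt_nonneg _
    have h2 : Real.sqrt (1-δ)^2 = 1-δ := Real.sq_sqrt (by linarith)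
    nlinarith
  linarith [hupper, hfin2]
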